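/- Let f(t), g(t) ∈ ℤ[t] be polynomials and v a unit of ℤ̂, and suppose that the equality of ideals (f(t)) = (g(t^v)) holds in ℤ̂[[t^ℤ̂]]. Then for every m ≥ 1, the m-th cyclotomic polynomial Φ_m(t) divides f(t) in ℤ[t] if and only if it divides g(t) in ℤ[t]; moreover, if Φ_m(t) divides f(t), then the equality of ideals ((f/Φ_m)(t)) = ((g/Φ_m)(t^v)) holds in ℤ̂[[t^ℤ̂]]. -/

import Mathlib

open Polynomial

set_option synthInstance.maxHeartbeats 1000000
set_option maxHeartbeats 1000000

noncomputable section
noncomputable section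

/-- The ring of profinite integers `ẐZ = lim_n ℤ/nℤ`, realized as the subring of
`∏ n : ℕ+, ZMod n` consisting of families compatible under the natural projections. -/
def ZHatSubring : Subring (∀ n : ℕ+, ZMod n) where
  carrier := {f | ∀ (m n : ℕ+) (h : (m : ℕ) ∣ (n : ℕ)), ZMod.castHom h (ZMod m) (f n) = f m}
  mul_mem' := fun {a b} ha hb m n h => by
    simp only [Pi.mul_apply, map_mul, ha m n h, hb m n h]
  one_mem' := fun m n h => map_one _
  add_mem' := fun {a b} ha hb m n h => by
    simp only [Pi.add_apply, map_add, ha m n h, hb m n h]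
  zero_mem' := fun m n h => map_zero _
  neg_mem' := fun {a} ha m n h => by
    simp only [Pi.neg_apply, map_neg, ha m n h]

/-- The profinite integers as a type. -/
abbrev ZHat : Type := ZHatSubring

instance : CommRing ZHat := inferInstance

/-- The quotient ring `R[t]/(tⁿ - 1)`. -/
abbrev CycModN (R : Type) [CommRing R] (n : ℕ+) : Type :=
  Polynomial R ⧸ Ideal.span {(X : Polynomial R) ^ (n : ℕ) - 1}

lemma X_pow_sub_one_dvd {R : Type} [CommRing R] {m n : ℕ} (h : m ∣ n) :
    (X : Polynomial R) ^ m - 1 ∣ (X : Polynomial R) ^ n - 1 := by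
  obtain ⟨k, rfl⟩ := h
  simpa [pow_mul] using sub_dvd_pow_sub_pow ((X : Polynomial R) ^ m) 1 k

/-- The natural transition map `R[t]/(tⁿ-1) → R[t]/(tᵐ-1)` for `m ∣ n`. -/
def cycTransition (R : Type) [CommRing R] {m n : ℕ+} (h : (m : ℕ) ∣ (n : ℕ)) :
    CycModN R n →+* CycModN R m :=
  Ideal.Quotient.factor
    (Ideal.span_singleton_le_span_singleton.mpr (X_pow_sub_one_dvd h))

/-- The completed group ring `R[[t^Ẑ]] = lim_n R[t]/(tⁿ-1)`, realized as the subring of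
`∏ n : ℕ+, R[t]/(tⁿ-1)` of families compatible under the transition maps. -/
def CompletedCycRing (R : Type) [CommRing R] : Subring (∀ n : ℕ+, CycModN R n) where
  carrier := {f | ∀ (m n : ℕ+) (h : (m : ℕ) ∣ (n : ℕ)), cycTransition R h (f n) = f m}
  mul_mem' := fun {a b} ha hb m n h => by
    simp only [Pi.mul_apply, map_mul, ha m n h, hb m n h]
  one_mem' := fun m n h => map_one _
  add_mem' := fun {a b} ha hb m n h => by
    simp only [Pi.add_apply, map_add, ha m n h, hb m n h]
  zero_mem' := fun m n h => map_zero _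
  neg_mem' := fun {a} ha m n h => by
    simp only [Pi.neg_apply, map_neg, ha m n h]

instance completedCycRingCommRing (R : Type) [CommRing R] :
    CommRing (CompletedCycRing R) := inferInstance

/-- The natural ring homomorphism `R[t] → R[[t^Ẑ]]`, `f ↦ (f mod (tⁿ-1))ₙ`. -/
def polyToCompleted (R : Type) [CommRing R] : Polynomial R →+* CompletedCycRing R :=
  RingHom.codRestrict (Pi.ringHom fun n => Ideal.Quotient.mk _) _
    (fun f m n h => by
      exact Ideal.Quotient.factor_mk _ f)

/-- The natural ring homomorphism `ℤ[t] → R[[t^Ẑ]]`. -/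
def intPolyEmb (R : Type) [CommRing R] : Polynomial ℤ →+* CompletedCycRing R :=
  (polyToCompleted R).comp (Polynomial.mapRingHom (Int.castRingHom R))


/-- The image of `t` in `R[t]/(tⁿ-1)`. -/
def tGen (R : Type) [CommRing R] (n : ℕ+) : CycModN R n :=
  Ideal.Quotient.mk _ X

lemma tGen_pow_eq_one (R : Type) [CommRing R] (n : ℕ+) : (tGen R n) ^ (n : ℕ) = 1 := by
  have h : (Ideal.Quotient.mk (Ideal.span {(X : Polynomial R) ^ (n : ℕ) - 1}))
      ((X : Polynomial R) ^ (n : ℕ) - 1) = 0 :=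
    Ideal.Quotient.eq_zero_iff_mem.mpr (Ideal.subset_span rfl)
  simpa [tGen, map_sub, map_pow, sub_eq_zero] using h

lemma cycTransition_tGen (R : Type) [CommRing R] {m n : ℕ+} (h : (m : ℕ) ∣ (n : ℕ)) :
    cycTransition R h (tGen R n) = tGen R m :=
  Ideal.Quotient.factor_mk _ _

/-- For `v ∈ Ẑ` and `g ∈ ℤ[t]`, the element `g(t^v)` of `R[[t^Ẑ]]`, whose `n`-th component is
`g(t^{v_n}) mod (tⁿ-1)`, where `v ≡ v_n (mod n)`. -/
def substPow (R : Type) [CommRing R] (v : ZHat) (g : Polynomial ℤ) : CompletedCycRing R :=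
  ⟨fun n => Polynomial.aeval ((tGen R n) ^ ((v.1 n).val)) g, by
    intro m n h
    haveI : NeZero (m : ℕ) := ⟨m.ne_zero⟩
    haveI : NeZero (n : ℕ) := ⟨n.ne_zero⟩
    have hcomm : cycTransition R h (Polynomial.aeval ((tGen R n) ^ ((v.1 n).val)) g)
        = Polynomial.aeval (cycTransition R h ((tGen R n) ^ ((v.1 n).val))) g :=
      (Polynomial.aeval_algHom_apply ((cycTransition R h).toIntAlgHom) _ g).symm
    have hval : ((v.1 n).val) % (m : ℕ) = ((v.1 m).val) % (m : ℕ) := by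
      have hv := v.2 m n h
      have h2 : (v.1 m) = (((v.1 n).val : ℕ) : ZMod (m : ℕ)) := by
        rw [← hv, ZMod.castHom_apply, ← ZMod.natCast_val]
      rw [h2, ZMod.val_natCast]
      exact (Nat.mod_mod_of_dvd _ dvd_rfl).symm
    have hpow : (tGen R m) ^ ((v.1 n).val) = (tGen R m) ^ ((v.1 m).val) := by
      rw [pow_eq_pow_mod _ (tGen_pow_eq_one R m), hval,
        ← pow_eq_pow_mod _ (tGen_pow_eq_one R m)]
    rw [hcomm, map_pow, cycTransition_tGen, hpow]⟩

/-!
The substitutions `t ↦ tᶻ` (`z ∈ ℤ̂`) act on `ℤ̂[[t^ℤ̂]]` by ring endomorphisms, composing like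
multiplication in `ℤ̂`, so a unit `v` acts by an automorphism. The element `(tᶻ - 1)/(t - 1)`,
written at each level as an explicit geometric sum, shows `t - 1 ∣ tᶻ - 1`. Every monic divisor of
some `tᴹ - 1` is a non-zero-divisor of `ℤ̂[[t^ℤ̂]]`: an element it kills is divisible by every
integer at every level, hence zero. So `t - 1` and `tᵛ - 1` are associates, hence (substituting
`t ↦ tᵐ`) so are `tᵐ - 1` and `tᵐᵛ - 1`, and by induction over the divisors of `m` so are `Φₘ(t)`
and `Φₘ(tᵛ)`. Divisibility by `Φₘ(t)` in `ℤ̂[[t^ℤ̂]]` can be read at level `m`, where it descends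
to `ℤ[t]`. Hence `Φₘ ∣ f ⟺ Φₘ(t) ∣ g(tᵛ) ⟺ Φₘ(tᵛ) ∣ g(tᵛ) ⟺ Φₘ ∣ g`, and cancelling the
non-zero-divisor `Φₘ(t)` from `(Φₘ(t) f₁(t)) = (Φₘ(tᵛ) g₁(tᵛ))` gives the second claim.
-/

lemma geom_sum_eq_of_pow_eq_one {A : Type*} [CommSemiring A] {ζ : A} {m : ℕ} (hζ : ζ ^ m = 1)
    (s : ℕ) : ∑ i ∈ Finset.range s, ζ ^ i
      = (s / m : ℕ) * ∑ i ∈ Finset.range m, ζ ^ i + ∑ i ∈ Finset.range (s % m), ζ ^ i := by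
  have hmul (q : ℕ) : ∑ i ∈ Finset.range (m * q), ζ ^ i = q * ∑ i ∈ Finset.range m, ζ ^ i := by
    induction q with
    | zero => simp
    | succ q ih =>
      rw [Nat.mul_succ, Finset.sum_range_add, ih]
      simp [pow_add, pow_mul, hζ, add_mul]
  conv_lhs => rw [← Nat.div_add_mod s m]
  rw [Finset.sum_range_add, hmul]
  simp [pow_add, pow_mul, hζ]

lemma dvd_of_mk_dvd_mk {A : Type*} [CommRing A] {q r p : A} (hqr : q ∣ r)
    (h : Ideal.Quotient.mk (Ideal.span {r}) q ∣ Ideal.Quotient.mk (Ideal.span {r}) p) :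
    q ∣ p := by
  obtain ⟨y', hy⟩ := h
  obtain ⟨y, rfl⟩ := Ideal.Quotient.mk_surjective y'
  rw [← map_mul, Ideal.Quotient.eq, Ideal.mem_span_singleton] at hy
  simpa using dvd_add (hqr.trans hy) (dvd_mul_right q y)

lemma IsLeftRegular.associated_of_dvd_of_dvd {M : Type*} [CommMonoid M] {a b : M}
    (ha : IsLeftRegular a) (hab : a ∣ b) (hba : b ∣ a) : Associated a b := by
  obtain ⟨x, rfl⟩ := hab
  obtain ⟨y, hy⟩ := hba
  have hxy : x * y = 1 := ha (show a * (x * y) = a * 1 by rw [mul_one, ← mul_assoc, ← hy])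
  exact ⟨⟨x, y, hxy, by rw [mul_comm, hxy]⟩, rfl⟩

lemma Associated.of_mul_right_of_isLeftRegular {M : Type*} [CommMonoid M] {a b c : M}
    (h : Associated (a * c) (b * c)) (hc : IsLeftRegular c) : Associated a b := by
  obtain ⟨u, hu⟩ := h
  exact ⟨u, hc (show c * (a * u) = c * b by rw [mul_comm c b, ← hu]; ac_rfl)⟩

lemma Ideal.span_singleton_mul_eq_span_singleton_mul_iff {A : Type*} [CommSemiring A]
    {a x y : A} (ha : IsLeftRegular a) :
    Ideal.span {a * x} = Ideal.span {a * y} ↔ Ideal.span {x} = Ideal.span {y} := by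
  simp only [le_antisymm_iff, Ideal.span_singleton_le_span_singleton, ha.dvd_cancel_left]

namespace ZHat

lemma natCast_apply (a : ℕ) (n : ℕ+) : (a : ZHat).1 n = a := rfl

lemma mul_apply (a b : ZHat) (n : ℕ+) : (a * b).1 n = a.1 n * b.1 n := rfl

lemma apply_eq_natCast_val (z : ZHat) {m n : ℕ+} (h : (m : ℕ) ∣ n) :
    z.1 m = ((z.1 n).val : ZMod m) := by
  rw [← z.2 m n h, ZMod.castHom_apply, ZMod.cast_eq_val]

lemma val_apply_of_dvd (z : ZHat) {m n : ℕ+} (h : (m : ℕ) ∣ n) :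
    (z.1 m).val = (z.1 n).val % m := by
  rw [z.apply_eq_natCast_val h, ZMod.val_natCast]

instance : CharZero ZHat where
  cast_injective a b h := by
    have : (a : ZMod (a + b + 1)) = b := congrArg (fun x : ZHat => x.1 ⟨a + b + 1, by omega⟩) h
    rw [ZMod.natCast_eq_natCast_iff'] at this
    rwa [Nat.mod_eq_of_lt (by omega), Nat.mod_eq_of_lt (by omega)] at this

lemma eq_zero_of_forall_natCast_dvd {a : ZHat} (h : ∀ c : ℕ+, ((c : ℕ) : ZHat) ∣ a) : a = 0 := by
  refine Subtype.ext (funext fun n => ?_)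
  obtain ⟨b, rfl⟩ := h n
  show (((n : ℕ) : ZHat) * b).1 n = 0
  rw [mul_apply, natCast_apply, ZMod.natCast_self, zero_mul]

lemma isLeftRegular_natCast {c : ℕ} (hc : 0 < c) : IsLeftRegular (c : ZHat) := by
  refine isLeftRegular_iff_right_eq_zero_of_mul.mpr fun a ha => ?_
  refine Subtype.ext (funext fun k => ?_)
  let N : ℕ+ := ⟨c * k, Nat.mul_pos hc k.pos⟩
  have hN : (c * (a.1 N).val : ZMod N) = 0 := by
    rw [ZMod.natCast_val, ZMod.cast_id', id, ← natCast_apply, ← mul_apply, ha]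
    rfl
  rw [← Nat.cast_mul, ZMod.natCast_eq_zero_iff] at hN
  change a.1 k = 0
  rw [a.apply_eq_natCast_val (n := N) (Dvd.intro_left c rfl), ZMod.natCast_eq_zero_iff]
  exact Nat.dvd_of_mul_dvd_mul_left hc hN

/-- `ZHat.div z n = (z - zₙ) / n`, where `0 ≤ zₙ < n` represents `z mod n`. -/
def div (z : ZHat) (n : ℕ+) : ZHat :=
  ⟨fun k => (((z.1 (n * k)).val / n : ℕ) : ZMod k), fun k k' hk => by
    dsimp only
    rw [map_natCast, z.val_apply_of_dvd (m := n * k) (n := n * k')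
      (by simpa using mul_dvd_mul_left (n : ℕ) hk), PNat.mul_coe n k, Nat.mod_mul_right_div_self,
      ZMod.natCast_mod]⟩

lemma natCast_mul_div_add_val (z : ZHat) (n : ℕ+) :
    (n : ZHat) * z.div n + ((z.1 n).val : ZHat) = z := by
  refine Subtype.ext (funext fun k => ?_)
  change (n : ZMod k) * (((z.1 (n * k)).val / n : ℕ) : ZMod k) + ((z.1 n).val : ZMod k) = z.1 k
  rw [z.val_apply_of_dvd (m := n) (n := n * k) (by simp),
    z.apply_eq_natCast_val (m := k) (n := n * k) (by simp), ← Nat.cast_mul,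
    ← Nat.cast_add, Nat.div_add_mod]

lemma div_eq_val_div_add_div_mul (z : ZHat) {m n : ℕ+} (h : (m : ℕ) ∣ n) :
    z.div m = (((z.1 n).val / m : ℕ) : ZHat) + z.div n * ((n / m : ℕ) : ZHat) := by
  apply isLeftRegular_natCast m.pos
  have h1 := natCast_mul_div_add_val z n
  have h2 := natCast_mul_div_add_val z m
  have h3 : ((z.1 n).val : ZHat) = m * ((z.1 n).val / m : ℕ) + (z.1 m).val := by
    rw [z.val_apply_of_dvd h]
    exact_mod_cast (Nat.div_add_mod _ _).symm
  have h4 : (n : ZHat) = m * (n / m : ℕ) := by exact_mod_cast (Nat.mul_div_cancel' h).symm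
  change (m : ZHat) * _ = m * _
  linear_combination h2 - h1 + h3 + z.div n * h4

end ZHat

section PowSubst

variable {R : Type} [CommRing R]

@[ext]
lemma CompletedCycRing.ext {x y : CompletedCycRing R} (h : ∀ n, x.1 n = y.1 n) : x = y :=
  Subtype.ext (funext h)

lemma intPolyEmb_apply (g : ℤ[X]) (n : ℕ+) : (intPolyEmb R g).1 n = aeval (tGen R n) g := by
  rw [← aeval_map_algebraMap R, tGen, ← Ideal.Quotient.mkₐ_eq_mk R, aeval_algHom_apply,
    aeval_X_left_apply]
  rfl

lemma cycTransition_mk {m n : ℕ+} (h : (m : ℕ) ∣ n) (p : R[X]) :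
    cycTransition R h (Ideal.Quotient.mk _ p) = Ideal.Quotient.mk _ p :=
  Ideal.Quotient.factor_mk _ _

lemma cycTransition_algebraMap {m n : ℕ+} (h : (m : ℕ) ∣ n) (r : R) :
    cycTransition R h (algebraMap R _ r) = algebraMap R _ r :=
  rfl

lemma CycModN.algHom_ext {n : ℕ+} {A : Type} [CommRing A] [Algebra R A]
    {f g : CycModN R n →ₐ[R] A} (h : f (tGen R n) = g (tGen R n)) : f = g :=
  Ideal.Quotient.algHom_ext R (Polynomial.algHom_ext h)

variable (R) in
def cycPowHom (n : ℕ+) (w : ℕ) : CycModN R n →ₐ[R] CycModN R n :=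
  Ideal.Quotient.liftₐ _ (aeval (tGen R n ^ w)) fun a ha => by
    obtain ⟨c, rfl⟩ := Ideal.mem_span_singleton'.mp ha
    rw [map_mul, map_sub, map_pow, aeval_X, map_one, ← pow_mul, mul_comm w, pow_mul,
      tGen_pow_eq_one, one_pow, sub_self, mul_zero]

lemma cycPowHom_tGen (n : ℕ+) (w : ℕ) : cycPowHom R n w (tGen R n) = tGen R n ^ w :=
  (Ideal.Quotient.lift_mk _ _ _).trans (aeval_X _)

lemma cycPowHom_aeval (n : ℕ+) (w : ℕ) (g : ℤ[X]) :
    cycPowHom R n w (aeval (tGen R n) g) = aeval (tGen R n ^ w) g := by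
  rw [← cycPowHom_tGen]
  exact (aeval_algHom_apply ((cycPowHom R n w).restrictScalars ℤ) (tGen R n) g).symm

lemma cycPowHom_cycPowHom (n : ℕ+) (a b : ℕ) (x : CycModN R n) :
    cycPowHom R n a (cycPowHom R n b x) = cycPowHom R n (b * a) x := by
  rw [← AlgHom.comp_apply]
  congr 1
  exact CycModN.algHom_ext (by
    rw [AlgHom.comp_apply, cycPowHom_tGen, map_pow, cycPowHom_tGen, cycPowHom_tGen, ← pow_mul,
      mul_comm])

lemma cycPowHom_congr (n : ℕ+) {a b : ℕ} (h : a % n = b % n) :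
    cycPowHom R n a = cycPowHom R n b :=
  CycModN.algHom_ext (by
    rw [cycPowHom_tGen, cycPowHom_tGen, pow_eq_pow_mod a (tGen_pow_eq_one R n), h,
      ← pow_eq_pow_mod b (tGen_pow_eq_one R n)])

lemma cycPowHom_one (n : ℕ+) : cycPowHom R n 1 = AlgHom.id R (CycModN R n) :=
  CycModN.algHom_ext (by simp [cycPowHom_tGen])

lemma cycTransition_cycPowHom {m n : ℕ+} (h : (m : ℕ) ∣ n) (w : ℕ) (x : CycModN R n) :
    cycTransition R h (cycPowHom R n w x) = cycPowHom R m w (cycTransition R h x) := by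
  let π : CycModN R n →ₐ[R] CycModN R m := Ideal.Quotient.factorₐ R
    (Ideal.span_singleton_le_span_singleton.mpr (X_pow_sub_one_dvd h))
  have hπ : π.comp (cycPowHom R n w) = (cycPowHom R m w).comp π :=
    CycModN.algHom_ext (by
      change cycTransition R h (cycPowHom R n w (tGen R n))
        = cycPowHom R m w (cycTransition R h (tGen R n))
      rw [cycPowHom_tGen, map_pow, cycTransition_tGen, cycPowHom_tGen])
  exact DFunLike.congr_fun hπ x

variable (R) in
def substPowHom (z : ZHat) : CompletedCycRing R →+* CompletedCycRing R :=
  RingHom.codRestrict (RingHom.pi fun n => (cycPowHom R n (z.1 n).val).toRingHom.comp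
      ((Pi.evalRingHom _ n).comp (CompletedCycRing R).subtype)) _ fun x m n h => by
    change cycTransition R h (cycPowHom R n (z.1 n).val (x.1 n)) = cycPowHom R m (z.1 m).val (x.1 m)
    rw [cycTransition_cycPowHom, x.2 m n h,
      cycPowHom_congr m (b := (z.1 m).val) (by rw [z.val_apply_of_dvd h, Nat.mod_mod])]

lemma substPowHom_apply (z : ZHat) (x : CompletedCycRing R) (n : ℕ+) :
    (substPowHom R z x).1 n = cycPowHom R n (z.1 n).val (x.1 n) :=
  rfl

lemma substPowHom_substPowHom (z w : ZHat) (x : CompletedCycRing R) :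
    substPowHom R z (substPowHom R w x) = substPowHom R (w * z) x := by
  ext n
  rw [substPowHom_apply, substPowHom_apply, substPowHom_apply, cycPowHom_cycPowHom,
    cycPowHom_congr n (b := ((w * z).1 n).val) (by rw [ZHat.mul_apply, ZMod.val_mul, Nat.mod_mod])]

lemma substPowHom_one (x : CompletedCycRing R) : substPowHom R 1 x = x := by
  ext n
  rw [substPowHom_apply, cycPowHom_congr n (b := 1) (by simp [ZMod.val_one_eq_one_mod]),
    cycPowHom_one]
  rfl

variable (R) in
def substPowEquiv (v : ZHatˣ) : CompletedCycRing R ≃+* CompletedCycRing R :=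
  RingEquiv.ofRingHom (substPowHom R v) (substPowHom R ↑v⁻¹)
    (RingHom.ext fun x => by simp [substPowHom_substPowHom, substPowHom_one])
    (RingHom.ext fun x => by simp [substPowHom_substPowHom, substPowHom_one])

@[simp]
lemma substPowEquiv_apply (v : ZHatˣ) (x : CompletedCycRing R) :
    substPowEquiv R v x = substPowHom R v x :=
  rfl

lemma substPowHom_intPolyEmb (z : ZHat) (g : ℤ[X]) :
    substPowHom R z (intPolyEmb R g) = substPow R z g := by
  ext n
  rw [substPowHom_apply, intPolyEmb_apply, cycPowHom_aeval]
  rfl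

lemma substPowHom_natCast_intPolyEmb (k : ℕ) (g : ℤ[X]) :
    substPowHom R k (intPolyEmb R g) = intPolyEmb R (expand ℤ k g) := by
  ext n
  rw [substPowHom_apply, intPolyEmb_apply, intPolyEmb_apply, cycPowHom_aeval, expand_aeval,
    ZHat.natCast_apply, ZMod.val_natCast, ← pow_eq_pow_mod _ (tGen_pow_eq_one R n)]

lemma substPow_mul (z : ZHat) (f g : ℤ[X]) :
    substPow R z (f * g) = substPow R z f * substPow R z g := by
  simp only [← substPowHom_intPolyEmb, map_mul]

lemma substPow_prod {ι : Type*} (z : ZHat) (s : Finset ι) (f : ι → ℤ[X]) :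
    substPow R z (∏ i ∈ s, f i) = ∏ i ∈ s, substPow R z (f i) := by
  simp only [← substPowHom_intPolyEmb, map_prod]

lemma substPowHom_natCast_substPow (k : ℕ) (z : ZHat) (g : ℤ[X]) :
    substPowHom R k (substPow R z g) = substPow R z (expand ℤ k g) := by
  rw [← substPowHom_intPolyEmb, substPowHom_substPowHom, mul_comm, ← substPowHom_substPowHom,
    substPowHom_natCast_intPolyEmb, substPowHom_intPolyEmb]

end PowSubst

lemma intPolyEmb_dvd_intPolyEmb_iff {q : ℤ[X]} (hq : q.Monic) {M : ℕ} (hM : 0 < M)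
    (hqM : q ∣ X ^ M - 1) (p : ℤ[X]) :
    intPolyEmb ZHat q ∣ intPolyEmb ZHat p ↔ q ∣ p := by
  refine ⟨fun h => ?_, map_dvd _⟩
  rw [← map_dvd_map (Int.castRingHom ZHat) Int.cast_injective hq]
  have hqM' : q.map (Int.castRingHom ZHat) ∣ X ^ M - 1 := by
    simpa using map_dvd (mapRingHom (Int.castRingHom ZHat)) hqM
  obtain ⟨k, hk⟩ := h
  exact dvd_of_mk_dvd_mk hqM' ⟨k.1 ⟨M, hM⟩, congrArg (fun x => x.1 ⟨M, hM⟩) hk⟩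

lemma AdjoinRoot.eq_zero_of_forall_natCast_dvd {f : ZHat[X]} (hf : f.Monic) {y : AdjoinRoot f}
    (h : ∀ c : ℕ+, ((c : ℕ) : AdjoinRoot f) ∣ y) : y = 0 := by
  let b := (AdjoinRoot.powerBasis' hf).basis
  refine b.forall_coord_eq_zero_iff.mp fun i => ZHat.eq_zero_of_forall_natCast_dvd fun c => ?_
  obtain ⟨u, rfl⟩ := h c
  refine ⟨b.coord i u, ?_⟩
  rw [← map_natCast (algebraMap ZHat (AdjoinRoot f)), ← Algebra.smul_def, map_smul, smul_eq_mul]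

lemma natCast_dvd_apply_of_intPolyEmb_mul_eq_zero {q : ℤ[X]} (hq : q.Monic) {n : ℕ+}
    (hqn : q ∣ X ^ (n : ℕ) - 1) {x : CompletedCycRing ZHat} (hx : intPolyEmb ZHat q * x = 0)
    (c : ℕ+) : ((c : ℕ) : CycModN ZHat n) ∣ x.1 n := by
  -- `tⁿᶜ - 1 = q D S` with `S = 1 + tⁿ + ⋯ + tⁿ⁽ᶜ⁻¹⁾`, so at level `nc` cancelling the monic `q`
  -- gives `D S ∣ y`; at level `n` the factor `S` becomes `c`.
  obtain ⟨D, hD⟩ := map_dvd (mapRingHom (Int.castRingHom ZHat)) hqn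
  simp only [coe_mapRingHom, Polynomial.map_sub, Polynomial.map_pow, map_X, Polynomial.map_one]
    at hD
  set S : ZHat[X] := ∑ j ∈ Finset.range c, (X ^ (n : ℕ)) ^ j
  obtain ⟨y, hy⟩ := Ideal.Quotient.mk_surjective (x.1 (n * c))
  have hqy : q.map (Int.castRingHom ZHat) * (D * S) ∣ q.map (Int.castRingHom ZHat) * y := by
    have h0 : (intPolyEmb ZHat q * x).1 (n * c) = 0 := by rw [hx]; rfl
    change Ideal.Quotient.mk _ (q.map (Int.castRingHom ZHat)) * x.1 (n * c) = 0 at h0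
    rwa [← hy, ← map_mul, Ideal.Quotient.eq_zero_iff_mem, Ideal.mem_span_singleton,
      PNat.mul_coe, pow_mul, ← geom_sum_mul, mul_comm, hD, mul_assoc] at h0
  obtain ⟨w, rfl⟩ := (hq.map _).isRegular.left.dvd_cancel_left.mp hqy
  have hS : Ideal.Quotient.mk (Ideal.span {X ^ (n : ℕ) - 1}) S = (c : CycModN ZHat n) := by
    have hX : (Ideal.Quotient.mk _ X : CycModN ZHat n) ^ (n : ℕ) = 1 := tGen_pow_eq_one ZHat n
    simp [S, hX]
  refine ⟨Ideal.Quotient.mk _ (D * w), ?_⟩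
  rw [← x.2 n (n * c) (by rw [PNat.mul_coe]; exact dvd_mul_right _ _), ← hy, cycTransition_mk,
    mul_comm D, mul_assoc, map_mul, hS]

theorem isLeftRegular_intPolyEmb {q : ℤ[X]} (hq : q.Monic) {M : ℕ} (hM : 0 < M)
    (hqM : q ∣ X ^ M - 1) : IsLeftRegular (intPolyEmb ZHat q) := by
  refine isLeftRegular_iff_right_eq_zero_of_mul.mpr fun x hx => ?_
  ext n
  let N : ℕ+ := ⟨n * M, Nat.mul_pos n.pos hM⟩
  have hMN : M ∣ N := Dvd.intro_left _ rfl
  have hmon : (X ^ (N : ℕ) - 1 : ZHat[X]).Monic := by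
    simpa using monic_X_pow_sub_C (1 : ZHat) N.ne_zero
  have hxN : x.1 N = 0 := AdjoinRoot.eq_zero_of_forall_natCast_dvd hmon
    (natCast_dvd_apply_of_intPolyEmb_mul_eq_zero hq (hqM.trans (X_pow_sub_one_dvd hMN)) hx)
  rw [← x.2 n N (Dvd.intro M rfl), hxN, map_zero]
  rfl

/-- The element `(tᶻ - 1)/(t - 1)` of `ℤ̂[[t^ℤ̂]]`. -/
def geomSumElt (z : ZHat) : CompletedCycRing ZHat :=
  ⟨fun n => ∑ i ∈ Finset.range (z.1 n).val, tGen ZHat n ^ i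
      + algebraMap ZHat _ (z.div n) * ∑ i ∈ Finset.range n, tGen ZHat n ^ i, fun m n h => by
    simp only [map_add, map_mul, map_sum, map_pow, cycTransition_tGen, cycTransition_algebraMap]
    rw [geom_sum_eq_of_pow_eq_one (tGen_pow_eq_one ZHat m) (z.1 n).val,
      geom_sum_eq_of_pow_eq_one (tGen_pow_eq_one ZHat m) n, ← z.val_apply_of_dvd h,
      Nat.mod_eq_zero_of_dvd h, z.div_eq_val_div_add_div_mul h]
    simp only [Finset.range_zero, Finset.sum_empty, add_zero, map_add, map_mul, map_natCast]
    ring⟩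

lemma intPolyEmb_X_sub_one_mul_geomSumElt (z : ZHat) :
    intPolyEmb ZHat (X - 1) * geomSumElt z = substPow ZHat z (X - 1) := by
  ext n
  change (intPolyEmb ZHat (X - 1)).1 n * (geomSumElt z).1 n = (substPow ZHat z (X - 1)).1 n
  rw [intPolyEmb_apply]
  simp only [geomSumElt, substPow, map_sub, aeval_X, map_one]
  linear_combination geom_sum_mul (tGen ZHat n) (z.1 n).val
    + algebraMap ZHat _ (z.div n) * (geom_sum_mul (tGen ZHat n) n + tGen_pow_eq_one ZHat n)

theorem associated_intPolyEmb_X_sub_one (v : ZHatˣ) :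
    Associated (intPolyEmb ZHat (X - 1)) (substPow ZHat v (X - 1)) := by
  refine (isLeftRegular_intPolyEmb (monic_X_sub_C 1) one_pos (by simp)).associated_of_dvd_of_dvd
    (Dvd.intro _ (intPolyEmb_X_sub_one_mul_geomSumElt v)) ?_
  have := map_dvd (substPowHom ZHat v) (Dvd.intro _ (intPolyEmb_X_sub_one_mul_geomSumElt ↑v⁻¹))
  rwa [← substPowHom_intPolyEmb, substPowHom_substPowHom, Units.inv_mul, substPowHom_one,
    substPowHom_intPolyEmb] at this

theorem associated_intPolyEmb_X_pow_sub_one (v : ZHatˣ) (m : ℕ) :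
    Associated (intPolyEmb ZHat (X ^ m - 1)) (substPow ZHat v (X ^ m - 1)) := by
  have hexp : expand ℤ m (X - 1) = X ^ m - 1 := by simp
  simpa only [substPowHom_natCast_intPolyEmb, substPowHom_natCast_substPow, hexp] using
    (associated_intPolyEmb_X_sub_one v).map (substPowHom ZHat m)

theorem associated_intPolyEmb_cyclotomic (v : ZHatˣ) {m : ℕ} (hm : 0 < m) :
    Associated (intPolyEmb ZHat (cyclotomic m ℤ)) (substPow ZHat v (cyclotomic m ℤ)) := by
  induction m using Nat.strong_induction_on with
  | _ m ih =>
  set Q := ∏ d ∈ m.properDivisors, cyclotomic d ℤ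
  have hprod : X ^ m - 1 = cyclotomic m ℤ * Q := by
    rw [← prod_cyclotomic_eq_X_pow_sub_one hm, ← Nat.cons_self_properDivisors hm.ne',
      Finset.prod_cons]
  have hQ : Associated (intPolyEmb ZHat Q) (substPow ZHat v Q) := by
    rw [map_prod, substPow_prod]
    exact Associated.prod _ _ _ fun d hd =>
      ih d (Nat.mem_properDivisors.mp hd).2 (Nat.pos_of_mem_properDivisors hd)
  have hQreg : IsLeftRegular (intPolyEmb ZHat Q) :=
    isLeftRegular_intPolyEmb (monic_prod_of_monic _ _ fun d _ => cyclotomic.monic d ℤ) hm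
      (Dvd.intro_left _ hprod.symm)
  have hX := associated_intPolyEmb_X_pow_sub_one v m
  rw [hprod, map_mul, substPow_mul] at hX
  exact (hX.trans (hQ.symm.mul_left _)).of_mul_right_of_isLeftRegular hQreg

/-- If `(f(t)) = (g(t^v))` in `Ẑ[[t^Ẑ]]` then, for every `m ≥ 1`,
`Φ_m(t) ∣ f(t)` in `ℤ[t]` iff `Φ_m(t) ∣ g(t)` in `ℤ[t]`; and if `Φ_m(t)` divides `f(t)` then
`((f/Φ_m)(t)) = ((g/Φ_m)(t^v))` in `Ẑ[[t^Ẑ]]`. -/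
theorem cyclotomic_dvd_iff_of_span_eq (f g : Polynomial ℤ) (v : ZHatˣ)
    (hspan : Ideal.span {intPolyEmb ZHat f} = Ideal.span {substPow ZHat (v : ZHat) g})
    (m : ℕ) (hm : 1 ≤ m) :
    (cyclotomic m ℤ ∣ f ↔ cyclotomic m ℤ ∣ g) ∧
    (∀ f₁ g₁ : Polynomial ℤ, f = cyclotomic m ℤ * f₁ → g = cyclotomic m ℤ * g₁ →
      Ideal.span {intPolyEmb ZHat f₁} = Ideal.span {substPow ZHat (v : ZHat) g₁}) := by
  have hΦ : (cyclotomic m ℤ).Monic := cyclotomic.monic m ℤ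
  have hΦm : cyclotomic m ℤ ∣ X ^ m - 1 := cyclotomic.dvd_X_pow_sub_one m ℤ
  have hassoc := associated_intPolyEmb_cyclotomic v hm
  have hfg : intPolyEmb ZHat f ∣ substPow ZHat v g :=
    Ideal.span_singleton_le_span_singleton.mp hspan.ge
  have hgf : substPow ZHat v g ∣ intPolyEmb ZHat f :=
    Ideal.span_singleton_le_span_singleton.mp hspan.le
  refine ⟨?_, fun f₁ g₁ hf hg => ?_⟩
  · calc cyclotomic m ℤ ∣ f
        ↔ intPolyEmb ZHat (cyclotomic m ℤ) ∣ intPolyEmb ZHat f :=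
          (intPolyEmb_dvd_intPolyEmb_iff hΦ hm hΦm f).symm
      _ ↔ intPolyEmb ZHat (cyclotomic m ℤ) ∣ substPow ZHat v g :=
          ⟨fun h => h.trans hfg, fun h => h.trans hgf⟩
      _ ↔ substPow ZHat v (cyclotomic m ℤ) ∣ substPow ZHat v g := hassoc.dvd_iff_dvd_left
      _ ↔ intPolyEmb ZHat (cyclotomic m ℤ) ∣ intPolyEmb ZHat g := by
          simpa only [substPowEquiv_apply, substPowHom_intPolyEmb] using
            map_dvd_iff (substPowEquiv ZHat v) (a := intPolyEmb ZHat (cyclotomic m ℤ))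
              (b := intPolyEmb ZHat g)
      _ ↔ cyclotomic m ℤ ∣ g := intPolyEmb_dvd_intPolyEmb_iff hΦ hm hΦm g
  · obtain ⟨u, hu⟩ := hassoc
    rwa [hf, hg, map_mul, substPow_mul, ← hu, mul_assoc,
      Ideal.span_singleton_mul_eq_span_singleton_mul_iff (isLeftRegular_intPolyEmb hΦ hm hΦm),
      Ideal.span_singleton_mul_left_unit u.isUnit] at hspan
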